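/- arXiv:1403.3843 — 2 statements merged into one kernel-verified Lean document; each statement's English description precedes it below -/
import Mathlib

section
/- The function W : GL⁺(3) → ℝ defined by W(F) = exp((1/12)·Σ_{1≤i<j≤3} (log μᵢ(F) − log μⱼ(F))²), where μ₁(F), μ₂(F), μ₃(F) are the eigenvalues of FᵀF, is not rank-one convex on SL(3): there exist a real 3×3 matrix F with det F = 1 and vectors ξ, η ∈ ℝ³ with ⟨F⁻¹ξ, η⟩ = 0 (so that det(F + t·ξ⊗η) = 1 for all t ∈ ℝ) such that the map t ↦ W(F + t·ξ⊗η) is not convex on ℝ. -/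
open Matrix Real

/-- `FᵀF` is Hermitian (symmetric) for a real matrix `F`. -/
theorem transpose_mul_self_isHermitian {n : ℕ} (F : Matrix (Fin n) (Fin n) ℝ) :
    (Fᵀ * F).IsHermitian := by
  simpa using Matrix.isHermitian_conjTranspose_mul_self F

/-- The eigenvalues of `FᵀF`. -/
noncomputable def muEig {n : ℕ} (F : Matrix (Fin n) (Fin n) ℝ) : Fin n → ℝ :=
  (transpose_mul_self_isHermitian F).eigenvalues

/-- The three-dimensional isochoric exponentiated Hencky energy (with `k = 1`),
`W(F) = exp((1/12)·Σ_{i<j}(log μᵢ − log μⱼ)²)`,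
where `μ₁, μ₂, μ₃` are the eigenvalues of `FᵀF`. -/
noncomputable def WisoEH3 (F : Matrix (Fin 3) (Fin 3) ℝ) : ℝ :=
  Real.exp ((1 : ℝ) / 12 *
    ((Real.log (muEig F 0) - Real.log (muEig F 1)) ^ 2
      + (Real.log (muEig F 1) - Real.log (muEig F 2)) ^ 2
      + (Real.log (muEig F 0) - Real.log (muEig F 2)) ^ 2))

/-!
On `SL(3)` the eigenvalues `μᵢ` of `FᵀF` have product `1`, so `W(F) = exp(¼ Σ (log μᵢ)²)`; for
`F₀ = diag(2⁷, 1, 2⁻⁷)` this is `exp(98 log² 2)`. Testing `FᵀF` on a unit eigenvector shows that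
every `μᵢ` lies between `‖F⁻¹‖⁻²` and `‖F‖²` (Frobenius norms), and three numbers in `[-A, B]`
with sum `0` have square sum at most `2(A² - AB + B²)`, the value at `(B, -A, A - B)`. Along
`ξ₀ ⊗ η₀ = (3/512) (128, 16, 1) ⊗ (128, -16, 1)` these bounds give
`W(F₀ ± ξ₀ ⊗ η₀) ≤ exp((3087/32) log² 2) < W(F₀)`, so convexity fails at the midpoint of `[-1, 1]`.
-/

theorem sum_sq_mulVec_le {m n : Type*} [Fintype m] [Fintype n] (M : Matrix m n ℝ) (v : n → ℝ) :
    ∑ i, (M *ᵥ v) i ^ 2 ≤ (∑ i, ∑ j, M i j ^ 2) * ∑ j, v j ^ 2 := by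
  rw [Finset.sum_mul]
  exact Finset.sum_le_sum fun i _ => Finset.sum_mul_sq_le_sq_mul_sq Finset.univ (M i) v

theorem det_add_smul_vecMulVec {R m : Type*} [CommRing R] [Fintype m] [DecidableEq m]
    {F : Matrix m m R} (hF : IsUnit F.det) (ξ η : m → R) (t : R) :
    (F + t • vecMulVec ξ η).det = F.det * (1 + t * (F⁻¹ *ᵥ ξ) ⬝ᵥ η) := by
  rw [← smul_vecMulVec, vecMulVec_eq (ι := Unit), det_add_replicateCol_mul_replicateRow hF,
    det_unique (n := Unit), Matrix.add_apply, one_apply_eq, Matrix.mul_assoc, ← replicateCol_mulVec,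
    replicateRow_mul_replicateCol_apply, mulVec_smul, dotProduct_smul, smul_eq_mul,
    dotProduct_comm]

section Eigenvalues

variable {n : ℕ}

theorem exists_muEig_eq_sum_sq_mulVec (F : Matrix (Fin n) (Fin n) ℝ) (i : Fin n) :
    ∃ v : Fin n → ℝ, ∑ j, v j ^ 2 = 1 ∧ muEig F i = ∑ j, (F *ᵥ v) j ^ 2 := by
  set hA := transpose_mul_self_isHermitian F
  refine ⟨hA.eigenvectorBasis i, ?_, ?_⟩
  · have h := hA.eigenvectorBasis.orthonormal.1 i
    rw [EuclideanSpace.norm_eq, Real.sqrt_eq_one] at h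
    simpa using h
  · rw [muEig, hA.eigenvalues_eq i, ← mulVec_mulVec, dotProduct_mulVec, vecMul_transpose]
    simp [dotProduct, sq]

theorem muEig_le_sum_sq (F : Matrix (Fin n) (Fin n) ℝ) (i : Fin n) :
    muEig F i ≤ ∑ j, ∑ k, F j k ^ 2 := by
  obtain ⟨v, hv, hμ⟩ := exists_muEig_eq_sum_sq_mulVec F i
  simpa [hμ, hv] using sum_sq_mulVec_le F v

theorem one_le_muEig_mul_sum_sq_inv {F : Matrix (Fin n) (Fin n) ℝ} (hF : IsUnit F.det)
    (i : Fin n) : 1 ≤ muEig F i * ∑ j, ∑ k, F⁻¹ j k ^ 2 := by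
  obtain ⟨v, hv, hμ⟩ := exists_muEig_eq_sum_sq_mulVec F i
  have h := sum_sq_mulVec_le F⁻¹ (F *ᵥ v)
  rwa [mulVec_mulVec, nonsing_inv_mul F hF, one_mulVec, hv, ← hμ, mul_comm] at h

theorem log_muEig_mem_Icc {F : Matrix (Fin n) (Fin n) ℝ} (hF : IsUnit F.det) {A B : ℝ}
    (hB : log (∑ j, ∑ k, F j k ^ 2) ≤ B) (hA : log (∑ j, ∑ k, F⁻¹ j k ^ 2) ≤ A) (i : Fin n) :
    log (muEig F i) ∈ Set.Icc (-A) B := by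
  have h := one_le_muEig_mul_sum_sq_inv hF i
  have hμ : 0 < muEig F i := pos_of_mul_pos_left (one_pos.trans_le h) (by positivity)
  have hσ : 0 < ∑ j, ∑ k, F⁻¹ j k ^ 2 := pos_of_mul_pos_right (one_pos.trans_le h) hμ.le
  constructor
  · have := Real.log_nonneg h
    rw [Real.log_mul hμ.ne' hσ.ne'] at this
    linarith
  · exact (Real.log_le_log hμ (muEig_le_sum_sq F i)).trans hB

theorem prod_muEig (F : Matrix (Fin n) (Fin n) ℝ) : ∏ i, muEig F i = F.det ^ 2 := by
  have h := (transpose_mul_self_isHermitian F).det_eq_prod_eigenvalues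
  simp only [RCLike.ofReal_real_eq_id, id, det_mul, det_transpose] at h
  rw [muEig, ← h, sq]

theorem sum_log_muEig_eq_zero {F : Matrix (Fin n) (Fin n) ℝ} (hF : F.det = 1) :
    ∑ i, log (muEig F i) = 0 := by
  have hprod : ∏ i, muEig F i = 1 := by rw [prod_muEig, hF, one_pow]
  rw [← Real.log_prod fun i _ =>
    Finset.prod_ne_zero_iff.1 (hprod ▸ one_ne_zero) i (Finset.mem_univ i), hprod, Real.log_one]

theorem sum_comp_muEig_of_transpose_mul_self_eq_diagonal {F : Matrix (Fin n) (Fin n) ℝ}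
    {d : Fin n → ℝ} (h : Fᵀ * F = diagonal d) (f : ℝ → ℝ) :
    ∑ i, f (muEig F i) = ∑ i, f (d i) := by
  have hroots := (transpose_mul_self_isHermitian F).roots_charpoly_eq_eigenvalues
  have hd : (Fᵀ * F).charpoly.roots = Multiset.map d Finset.univ.val := by
    rw [h, charpoly_diagonal, Polynomial.roots_prod _ _ (Finset.prod_ne_zero_iff.2
      fun i _ => Polynomial.X_sub_C_ne_zero (d i))]
    simp
  rw [hd, RCLike.ofReal_real_eq_id, Function.id_comp] at hroots
  simp only [muEig]
  simpa [Multiset.map_map, Function.comp_def, Finset.sum_eq_multiset_sum] using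
    congrArg (fun s => (s.map f).sum) hroots.symm

end Eigenvalues

theorem sq_add_mul_add_sq_le {x y A B : ℝ} (hx : 0 ≤ x) (hy : 0 ≤ y) (hxB : x ≤ B) (hyB : y ≤ B)
    (hA : x + y ≤ A) : x ^ 2 + x * y + y ^ 2 ≤ A ^ 2 - A * B + B ^ 2 := by
  have hxy := mul_nonneg hx hy
  rcases le_total (B - A) (x + y) with h | h
  · nlinarith [mul_nonneg (sub_nonneg.2 hxB) (sub_nonneg.2 hyB),
      mul_nonneg (sub_nonneg.2 hA) (sub_nonneg.2 h)]
  · nlinarith [mul_nonneg (add_nonneg hx hy) (sub_nonneg.2 h)]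

theorem sq_add_sq_add_sq_le {x y z A B : ℝ} (h : x + y + z = 0) (hx : x ∈ Set.Icc (-A) B)
    (hy : y ∈ Set.Icc (-A) B) (hz : z ∈ Set.Icc (-A) B) :
    x ^ 2 + y ^ 2 + z ^ 2 ≤ 2 * (A ^ 2 - A * B + B ^ 2) := by
  obtain ⟨hx₁, hx₂⟩ := hx
  obtain ⟨hy₁, hy₂⟩ := hy
  obtain ⟨hz₁, hz₂⟩ := hz
  -- two of the three numbers have the same sign
  rcases le_total 0 x with hx | hx <;> rcases le_total 0 y with hy | hy <;>
    rcases le_total 0 z with hz | hz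
  all_goals first
    | nlinarith [sq_add_mul_add_sq_le hx hy hx₂ hy₂ (by linarith : x + y ≤ A)]
    | nlinarith [sq_add_mul_add_sq_le hx hz hx₂ hz₂ (by linarith : x + z ≤ A)]
    | nlinarith [sq_add_mul_add_sq_le hy hz hy₂ hz₂ (by linarith : y + z ≤ A)]
    | nlinarith [sq_add_mul_add_sq_le (neg_nonneg.2 hx) (neg_nonneg.2 hy) (neg_le.1 hx₁)
        (neg_le.1 hy₁) (by linarith : -x + -y ≤ B)]
    | nlinarith [sq_add_mul_add_sq_le (neg_nonneg.2 hx) (neg_nonneg.2 hz) (neg_le.1 hx₁)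
        (neg_le.1 hz₁) (by linarith : -x + -z ≤ B)]
    | nlinarith [sq_add_mul_add_sq_le (neg_nonneg.2 hy) (neg_nonneg.2 hz) (neg_le.1 hy₁)
        (neg_le.1 hz₁) (by linarith : -y + -z ≤ B)]

theorem log_le_of_pow_le_two_pow {x : ℝ} (hx : 0 < x) {n m : ℕ} (hn : 0 < n)
    (h : x ^ n ≤ 2 ^ m) : log x ≤ m / n * log 2 := by
  have := Real.log_le_log (pow_pos hx n) h
  rw [Real.log_pow, Real.log_pow] at this
  rw [div_mul_eq_mul_div, le_div_iff₀ (by exact_mod_cast hn)]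
  linarith

theorem WisoEH3_eq_exp_sum_sq_log {F : Matrix (Fin 3) (Fin 3) ℝ} (hF : F.det = 1) :
    WisoEH3 F = exp ((∑ i, log (muEig F i) ^ 2) / 4) := by
  have hsum := sum_log_muEig_eq_zero hF
  rw [Fin.sum_univ_three] at hsum
  rw [WisoEH3, Fin.sum_univ_three]
  congr 1
  linear_combination (-(log (muEig F 0) + log (muEig F 1) + log (muEig F 2)) / 12) * hsum

theorem WisoEH3_le_exp {F : Matrix (Fin 3) (Fin 3) ℝ} (hF : F.det = 1) {A B : ℝ}
    (hB : log (∑ j, ∑ k, F j k ^ 2) ≤ B) (hA : log (∑ j, ∑ k, F⁻¹ j k ^ 2) ≤ A) :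
    WisoEH3 F ≤ exp ((A ^ 2 - A * B + B ^ 2) / 2) := by
  have hl := log_muEig_mem_Icc (hF ▸ isUnit_one) hB hA
  have hsum := sum_log_muEig_eq_zero hF
  rw [Fin.sum_univ_three] at hsum
  rw [WisoEH3_eq_exp_sum_sq_log hF, Fin.sum_univ_three, Real.exp_le_exp]
  linarith [sq_add_sq_add_sq_le hsum (hl 0) (hl 1) (hl 2)]

theorem WisoEH3_diagonal {v : Fin 3 → ℝ} (hv : ∏ i, v i = 1) :
    WisoEH3 (diagonal v) = exp (∑ i, log (v i) ^ 2) := by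
  have hv₀ : ∀ i, v i ≠ 0 := fun i =>
    Finset.prod_ne_zero_iff.1 (hv ▸ one_ne_zero) i (Finset.mem_univ i)
  have hsq : (diagonal v)ᵀ * diagonal v = diagonal fun i => v i * v i := by
    rw [diagonal_transpose, diagonal_mul_diagonal]
  rw [WisoEH3_eq_exp_sum_sq_log (by rwa [det_diagonal]),
    sum_comp_muEig_of_transpose_mul_self_eq_diagonal hsq fun x => log x ^ 2]
  congr 1
  simp only [Real.log_mul (hv₀ _) (hv₀ _), Fin.sum_univ_three]
  ring

namespace RankOneCounterexample

noncomputable def F₀ : Matrix (Fin 3) (Fin 3) ℝ := diagonal ![128, 1, 128⁻¹]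

def ξ₀ : Fin 3 → ℝ := ![128, 16, 1]

noncomputable def η₀ : Fin 3 → ℝ := ![3 / 4, -3 / 32, 3 / 512]

theorem det_F₀ : F₀.det = 1 := by
  simp [F₀, det_diagonal, Fin.prod_univ_three]

theorem inv_F₀_mulVec_ξ₀_dotProduct_η₀ : (F₀⁻¹ *ᵥ ξ₀) ⬝ᵥ η₀ = 0 := by
  have h : F₀⁻¹ = diagonal ![128, 1, 128⁻¹]⁻¹ := by
    refine inv_eq_left_inv ?_
    rw [F₀, diagonal_mul_diagonal, ← diagonal_one]
    congr 1
    ext i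
    fin_cases i <;> simp
  rw [h]
  simp [ξ₀, η₀, dotProduct, Fin.sum_univ_three, mulVec_diagonal]
  norm_num

theorem det_F₀_add_smul (t : ℝ) : (F₀ + t • vecMulVec ξ₀ η₀).det = 1 := by
  rw [det_add_smul_vecMulVec (det_F₀ ▸ isUnit_one), inv_F₀_mulVec_ξ₀_dotProduct_η₀, det_F₀]
  ring

theorem WisoEH3_F₀ : WisoEH3 F₀ = exp (98 * log 2 ^ 2) := by
  rw [F₀, WisoEH3_diagonal (by simp [Fin.prod_univ_three])]
  have h : log 128 = 7 * log 2 := by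
    rw [show (128 : ℝ) = 2 ^ 7 by norm_num, Real.log_pow]
    norm_num
  simp [Fin.sum_univ_three, Real.log_inv, h]
  ring

-- `(F₀ + t ξ₀ ⊗ η₀)⁻¹` is `F₀ - t ξ₀ ⊗ η₀` with the order of rows and of columns reversed.
theorem sum_sq_inv_F₀_add_smul (t : ℝ) :
    ∑ j, ∑ k, (F₀ + t • vecMulVec ξ₀ η₀)⁻¹ j k ^ 2
      = ∑ j, ∑ k, (F₀ + (-t) • vecMulVec ξ₀ η₀) j k ^ 2 := by
  rw [inv_def, det_F₀_add_smul, Ring.inverse_one, one_smul, adjugate_fin_three]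
  simp [F₀, ξ₀, η₀, Fin.sum_univ_three]
  ring

theorem log_sum_sq_F₀_add_vecMulVec_le :
    log (∑ j, ∑ k, (F₀ + (1 : ℝ) • vecMulVec ξ₀ η₀) j k ^ 2) ≤ 63 / 4 * log 2 := by
  refine log_le_of_pow_le_two_pow ?_ (by norm_num : 0 < 4) ?_ <;>
  · simp [F₀, ξ₀, η₀, Fin.sum_univ_three]
    norm_num

theorem log_sum_sq_F₀_sub_vecMulVec_le :
    log (∑ j, ∑ k, (F₀ + (-1 : ℝ) • vecMulVec ξ₀ η₀) j k ^ 2) ≤ 21 / 2 * log 2 := by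
  refine log_le_of_pow_le_two_pow ?_ (by norm_num : 0 < 2) ?_ <;>
  · simp [F₀, ξ₀, η₀, Fin.sum_univ_three]
    norm_num

theorem WisoEH3_F₀_add_smul_lt {t : ℝ} (ht : t = 1 ∨ t = -1) :
    WisoEH3 (F₀ + t • vecMulVec ξ₀ η₀) < WisoEH3 F₀ := by
  have hle : WisoEH3 (F₀ + t • vecMulVec ξ₀ η₀) ≤ exp (3087 / 32 * log 2 ^ 2) := by
    rcases ht with rfl | rfl
    · refine (WisoEH3_le_exp (det_F₀_add_smul 1) log_sum_sq_F₀_add_vecMulVec_le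
        (A := 21 / 2 * log 2) ?_).trans_eq (by ring_nf)
      rw [sum_sq_inv_F₀_add_smul]
      exact log_sum_sq_F₀_sub_vecMulVec_le
    · refine (WisoEH3_le_exp (det_F₀_add_smul (-1)) log_sum_sq_F₀_sub_vecMulVec_le
        (A := 63 / 4 * log 2) ?_).trans_eq (by ring_nf)
      rw [sum_sq_inv_F₀_add_smul, neg_neg]
      exact log_sum_sq_F₀_add_vecMulVec_le
  refine hle.trans_lt ?_
  rw [WisoEH3_F₀, Real.exp_lt_exp]
  exact mul_lt_mul_of_pos_right (by norm_num) (pow_pos (Real.log_pos one_lt_two) 2)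

end RankOneCounterexample

/-- The isochoric exponentiated Hencky energy `F ↦ e^{‖dev₃ log U‖²}` is not
rank-one convex even on `SL(3)`: there is a rank-one direction preserving the
determinant along which it fails to be convex. -/
theorem WisoEH3_not_rankOneConvex_SL3 :
    ∃ (F : Matrix (Fin 3) (Fin 3) ℝ) (ξ η : Fin 3 → ℝ),
      F.det = 1 ∧ dotProduct (F⁻¹ *ᵥ ξ) η = 0 ∧
      ¬ ConvexOn ℝ Set.univ (fun t : ℝ => WisoEH3 (F + t • Matrix.vecMulVec ξ η)) := by
  open RankOneCounterexample in
  refine ⟨F₀, ξ₀, η₀, det_F₀, inv_F₀_mulVec_ξ₀_dotProduct_η₀, fun hconv => ?_⟩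
  have hmid : (0 : ℝ) ∈ segment ℝ (-1) 1 := by
    rw [segment_eq_Icc (by norm_num)]
    norm_num
  have h := hconv.le_on_segment (Set.mem_univ _) (Set.mem_univ _) hmid
  rw [zero_smul, add_zero] at h
  exact h.not_gt
    (max_lt (WisoEH3_F₀_add_smul_lt (Or.inr rfl)) (WisoEH3_F₀_add_smul_lt (Or.inl rfl)))
end

section
/- Let k > 0 and define g : (0,∞)³ → ℝ by g(λ₁, λ₂, λ₃) = exp((k/3)·[(log λ₁ − log λ₂)² + (log λ₂ − log λ₃)² + (log λ₃ − log λ₁)²]). Then g is separately convex (convex in each variable λᵢ with the other two fixed) on all of (0,∞)³ if and only if k ≥ 3/16. -/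
/-!
In the variable `λᵢ` (the other two fixed) the energy is `x ↦ exp (q (log x))` for a quadratic
`q(t) = a t² + b t + c` with `a = 2k/3`. Its second derivative is
`exp (q (log x)) · (s² - s + 2a) / x²` with `s = q'(log x)`, and `s` sweeps all of `ℝ`; since
`min (s² - s) = -1/4`, convexity holds iff `2a ≥ 1/4`, i.e. `k ≥ 3/16`.
-/

open Real Set Filter

lemma ConvexOn.nonneg_of_hasDerivAt2 {s : Set ℝ} (hs : IsOpen s) {f f' : ℝ → ℝ} {x d : ℝ}
    (hf : ConvexOn ℝ s f) (hf' : ∀ y ∈ s, HasDerivAt f (f' y) y) (hx : x ∈ s)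
    (hf'' : HasDerivAt f' d x) : 0 ≤ d := by
  have hmono : MonotoneOn f' s :=
    (hf.monotoneOn_deriv fun y hy => (hf' y hy).differentiableAt).congr
      fun y hy => (hf' y hy).deriv
  have hacc : AccPt x (𝓟 s) := by
    simpa only [inter_univ] using
      (PerfectSpace.univ_preperfect x (mem_univ x)).nhds_inter (hs.mem_nhds hx)
  exact hf''.hasDerivWithinAt.nonneg_of_monotoneOn hacc hmono

section expQuadLog

variable (a b c : ℝ)

noncomputable def expQuadLog (x : ℝ) : ℝ := exp (a * log x ^ 2 + b * log x + c)

lemma hasDerivAt_expQuadLog {x : ℝ} (hx : x ≠ 0) :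
    HasDerivAt (expQuadLog a b c) (expQuadLog a b c x * (2 * a * log x + b) / x) x := by
  have hlog := hasDerivAt_log hx
  have hq : HasDerivAt (fun y => a * log y ^ 2 + b * log y + c) ((2 * a * log x + b) / x) x :=
    ((((hlog.pow 2).const_mul a).fun_add (hlog.const_mul b)).add_const c).congr_deriv (by
      field_simp; ring)
  exact hq.exp.congr_deriv (mul_div_assoc _ _ _).symm

lemma hasDerivAt_expQuadLog_deriv {x : ℝ} (hx : x ≠ 0) :
    HasDerivAt (fun y => expQuadLog a b c y * (2 * a * log y + b) / y)
      (expQuadLog a b c x * ((2 * a * log x + b) ^ 2 - (2 * a * log x + b) + 2 * a) / x ^ 2) x := by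
  have hs : HasDerivAt (fun y => 2 * a * log y + b) (2 * a / x) x :=
    (((hasDerivAt_log hx).const_mul (2 * a)).add_const b).congr_deriv (div_eq_mul_inv _ _).symm
  have hquot := ((hasDerivAt_expQuadLog a b c hx).fun_mul hs).fun_div (hasDerivAt_id' x) hx
  refine hquot.congr_deriv ?_
  field_simp
  ring

lemma convexOn_expQuadLog (ha : 1 / 8 ≤ a) : ConvexOn ℝ (Ioi 0) (expQuadLog a b c) := by
  refine convexOn_of_hasDerivWithinAt2_nonneg (convex_Ioi 0)
    (fun x hx => (hasDerivAt_expQuadLog a b c (ne_of_gt hx)).continuousAt.continuousWithinAt)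
    (fun x hx => (hasDerivAt_expQuadLog a b c (ne_of_gt (interior_subset hx))).hasDerivWithinAt)
    (fun x hx =>
      (hasDerivAt_expQuadLog_deriv a b c (ne_of_gt (interior_subset hx))).hasDerivWithinAt)
    fun x _ => ?_
  have hpos : 0 < expQuadLog a b c x := exp_pos _
  have hquad : 0 ≤ (2 * a * log x + b) ^ 2 - (2 * a * log x + b) + 2 * a := by
    nlinarith [sq_nonneg (2 * a * log x + b - 1 / 2)]
  positivity

lemma le_of_convexOn_expQuadLog (ha : a ≠ 0) (hconv : ConvexOn ℝ (Ioi 0) (expQuadLog a b c)) :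
    1 / 8 ≤ a := by
  -- the point where `s = 2a log x + b` equals `1/2`, the minimiser of `s² - s`
  set x₀ := exp ((1 / 2 - b) / (2 * a))
  have hx₀ : 0 < x₀ := exp_pos _
  have hs : 2 * a * log x₀ + b = 1 / 2 := by
    rw [log_exp]
    field_simp
    ring
  have h := hconv.nonneg_of_hasDerivAt2 isOpen_Ioi
    (fun y hy => hasDerivAt_expQuadLog a b c (ne_of_gt hy)) hx₀
    (hasDerivAt_expQuadLog_deriv a b c hx₀.ne')
  have hpos : 0 < expQuadLog a b c x₀ / x₀ ^ 2 := by
    have : 0 < expQuadLog a b c x₀ := exp_pos _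
    positivity
  rw [hs, mul_div_right_comm] at h
  nlinarith [(mul_nonneg_iff_of_pos_left hpos).1 h]

lemma convexOn_expQuadLog_iff (ha : a ≠ 0) :
    ConvexOn ℝ (Ioi 0) (expQuadLog a b c) ↔ 1 / 8 ≤ a :=
  ⟨le_of_convexOn_expQuadLog a b c ha, convexOn_expQuadLog a b c⟩

end expQuadLog

lemma convexOn_hencky_section_iff {k : ℝ} (hk : k ≠ 0) (t₂ t₃ : ℝ) :
    ConvexOn ℝ (Ioi 0)
        (fun l => exp (k / 3 * ((log l - t₂) ^ 2 + (t₂ - t₃) ^ 2 + (t₃ - log l) ^ 2))) ↔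
      3 / 16 ≤ k := by
  have hsection :
      (fun l => exp (k / 3 * ((log l - t₂) ^ 2 + (t₂ - t₃) ^ 2 + (t₃ - log l) ^ 2))) =
      expQuadLog (2 * k / 3) (-(2 * k / 3) * (t₂ + t₃))
        (k / 3 * ((t₂ - t₃) ^ 2 + t₂ ^ 2 + t₃ ^ 2)) := by
    funext l
    simp only [expQuadLog]
    ring_nf
  rw [hsection, convexOn_expQuadLog_iff _ _ _ (by positivity)]
  constructor <;> intro h <;> linarith

/-- The three-dimensional isochoric exponentiated Hencky energy in terms of singular
values, `g(λ₁,λ₂,λ₃) = exp((k/3)·[(log λ₁−log λ₂)² + (log λ₂−log λ₃)² + (log λ₃−log λ₁)²])`,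
is separately convex on all of `(0,∞)³` if and only if `k ≥ 3/16`. -/
theorem threeDim_g_separatelyConvex_iff (k : ℝ) (hk : 0 < k) :
    ((∀ l2 l3 : ℝ, 0 < l2 → 0 < l3 →
        ConvexOn ℝ (Set.Ioi (0 : ℝ)) (fun l1 : ℝ =>
          Real.exp (k / 3 * ((Real.log l1 - Real.log l2) ^ 2
            + (Real.log l2 - Real.log l3) ^ 2 + (Real.log l3 - Real.log l1) ^ 2)))) ∧
     (∀ l1 l3 : ℝ, 0 < l1 → 0 < l3 →
        ConvexOn ℝ (Set.Ioi (0 : ℝ)) (fun l2 : ℝ =>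
          Real.exp (k / 3 * ((Real.log l1 - Real.log l2) ^ 2
            + (Real.log l2 - Real.log l3) ^ 2 + (Real.log l3 - Real.log l1) ^ 2)))) ∧
     (∀ l1 l2 : ℝ, 0 < l1 → 0 < l2 →
        ConvexOn ℝ (Set.Ioi (0 : ℝ)) (fun l3 : ℝ =>
          Real.exp (k / 3 * ((Real.log l1 - Real.log l2) ^ 2
            + (Real.log l2 - Real.log l3) ^ 2 + (Real.log l3 - Real.log l1) ^ 2))))) ↔
    3 / 16 ≤ k := by
  have key := convexOn_hencky_section_iff hk.ne'
  constructor
  · rintro ⟨h, -, -⟩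
    exact (key (log 1) (log 1)).1 (h 1 1 one_pos one_pos)
  · intro hk316
    refine ⟨fun l2 l3 _ _ => (key (log l2) (log l3)).2 hk316, fun l1 l3 _ _ => ?_,
      fun l1 l2 _ _ => ?_⟩
    · convert (key (log l3) (log l1)).2 hk316 using 3
      ring
    · convert (key (log l1) (log l2)).2 hk316 using 3
      ring
end
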